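/- Suppose γ (in its arclength parametrization) is of class C³ on (a,b), with κ(s) ≠ 0 and κ'(s) ≠ 0 for all s ∈ (a,b). Then the evolute, in its arclength parametrization γ̃₁ = γ̃ ∘ R⁻¹, has signed curvature at the parameter value R(s) equal to −κ(s)³ / κ'(s). -/

import Mathlib

/-
The evolute's velocity is `R' ν`: differentiating `γ + R ν` with the Frenet equations `T' = κ ν`,
`ν' = -κ T`, the terms `T` and `R ν' = -T` cancel. Reparametrized by the inverse `ψ` of `R`, the
evolute therefore moves with unit velocity `ν ∘ ψ`, whose derivative is `ψ' ν' = -(κ / R') T`.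
Its signed curvature is `⟪-(κ / R') T, J ν⟫ = κ / R'`, and `R' = -κ' / κ²` gives `-κ³ / κ'`.
-/

open Set Real Topology Filter
open scoped NNReal

noncomputable section

/-- The Euclidean plane. -/
abbrev Plane := EuclideanSpace ℝ (Fin 2)

/-- Rotation of a plane vector by `+π/2`. -/
def Jrot (v : Plane) : Plane := WithLp.toLp 2 ![-(v 1), v 0]

local notation "⟪" x ", " y "⟫" => @inner ℝ _ _ x y

theorem HasStrictDerivAt.inv {𝕜 : Type*} [NontriviallyNormedField 𝕜] {c : 𝕜 → 𝕜} {c' x : 𝕜}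
    (hc : HasStrictDerivAt c c' x) (hx : c x ≠ 0) :
    HasStrictDerivAt (fun y => (c y)⁻¹) (-c' / c x ^ 2) x := by
  have := (hasStrictDerivAt_inv hx).comp x hc
  rwa [neg_mul, ← div_eq_inv_mul, ← neg_div] at this

theorem HasDerivAt.inner_eq_zero_of_eventually_norm_eq {E : Type*} [NormedAddCommGroup E]
    [InnerProductSpace ℝ E] {f : ℝ → E} {f' : E} {u r : ℝ} (hf : HasDerivAt f f' u)
    (hr : ∀ᶠ x in 𝓝 u, ‖f x‖ = r) : ⟪f u, f'⟫ = 0 := by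
  have hconst : HasDerivAt (‖f ·‖ ^ 2) 0 u :=
    (hasDerivAt_const u (r ^ 2)).congr_of_eventuallyEq (hr.mono fun x hx => by simp only [hx])
  have := hf.norm_sq.unique hconst
  linarith

section Reparametrization

variable {E : Type*} [NormedAddCommGroup E] [NormedSpace ℝ E] {F N : ℝ → E} {φ ψ : ℝ → ℝ}

theorem HasDerivAt.comp_leftInverse {N₀ : E} {φ' u : ℝ} (hF : HasDerivAt F (φ' • N₀) u)
    (hφ : HasStrictDerivAt φ φ' u) (hφ' : φ' ≠ 0) (hψ : ∀ᶠ x in 𝓝 u, ψ (φ x) = x) :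
    HasDerivAt (F ∘ ψ) N₀ (φ u) := by
  rw [← hψ.self_of_nhds] at hF
  simpa [smul_smul, inv_mul_cancel₀ hφ'] using
    hF.scomp (φ u) (hφ.to_local_left_inverse hφ' hψ).hasDerivAt

theorem hasDerivAt_deriv_comp_leftInverse {U : Set ℝ} (hU : IsOpen U) {φ' : ℝ → ℝ}
    (hF : ∀ u ∈ U, HasDerivAt F (φ' u • N u) u) (hφ : ∀ u ∈ U, HasStrictDerivAt φ (φ' u) u)
    (hφ' : ∀ u ∈ U, φ' u ≠ 0) (hψ : ∀ u ∈ U, ψ (φ u) = u) {s : ℝ} (hs : s ∈ U) {N' : E}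
    (hN : HasDerivAt N N' s) :
    HasDerivAt (deriv (F ∘ ψ)) ((φ' s)⁻¹ • N') (φ s) := by
  have hψU : ∀ u ∈ U, ∀ᶠ x in 𝓝 u, ψ (φ x) = x := fun u hu =>
    eventually_of_mem (hU.mem_nhds hu) hψ
  have hderiv : deriv (F ∘ ψ) =ᶠ[𝓝 (φ s)] N ∘ ψ := by
    rw [EventuallyEq, ← (hφ s hs).map_nhds_eq (hφ' s hs), eventually_map]
    filter_upwards [hU.mem_nhds hs] with u hu
    rw [((hF u hu).comp_leftInverse (hφ u hu) (hφ' u hu) (hψU u hu)).deriv,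
      Function.comp_apply, hψ u hu]
  rw [← hψ s hs] at hN
  exact (hN.scomp (φ s) ((hφ s hs).to_local_left_inverse (hφ' s hs) (hψU s hs)).hasDerivAt)
    |>.congr_of_eventuallyEq hderiv

end Reparametrization

section PlaneCurve

@[simp] lemma Jrot_apply_zero (v : Plane) : Jrot v 0 = -v 1 := rfl

@[simp] lemma Jrot_apply_one (v : Plane) : Jrot v 1 = v 0 := rfl

lemma Plane.inner_eq (v w : Plane) : ⟪v, w⟫ = v 0 * w 0 + v 1 * w 1 := by
  simp only [PiLp.inner_apply, RCLike.inner_apply, conj_trivial, Fin.sum_univ_two]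
  ring

def JrotCLM : Plane →L[ℝ] Plane :=
  LinearMap.toContinuousLinearMap
    { toFun := Jrot
      map_add' := fun v w => by ext i; fin_cases i <;> simp [add_comm]
      map_smul' := fun c v => by ext i; fin_cases i <;> simp }

@[simp] lemma JrotCLM_apply (v : Plane) : JrotCLM v = Jrot v := rfl

lemma Jrot_smul (c : ℝ) (v : Plane) : Jrot (c • v) = c • Jrot v := JrotCLM.map_smul c v

lemma Jrot_Jrot (v : Plane) : Jrot (Jrot v) = -v := by
  ext i; fin_cases i <;> simp

lemma eq_inner_Jrot_smul_Jrot_of_inner_eq_zero {v w : Plane} (hv : ‖v‖ = 1)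
    (hw : ⟪w, v⟫ = 0) : w = ⟪w, Jrot v⟫ • Jrot v := by
  have hvv : v 0 * v 0 + v 1 * v 1 = 1 := by
    rw [← Plane.inner_eq, real_inner_self_eq_norm_sq, hv, one_pow]
  rw [Plane.inner_eq] at hw
  ext i; fin_cases i <;>
    simp only [Fin.zero_eta, Fin.mk_one, Fin.isValue, Plane.inner_eq, Jrot_apply_zero,
      Jrot_apply_one, mul_neg, PiLp.smul_apply, smul_eq_mul]
  · linear_combination v 0 * hw - w 0 * hvv
  · linear_combination v 1 * hw - w 1 * hvv

variable {T : ℝ → Plane} {T' : Plane} {u : ℝ}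

theorem HasDerivAt.eq_smul_Jrot_of_norm_eq_one (hT : HasDerivAt T T' u)
    (hunit : ∀ᶠ x in 𝓝 u, ‖T x‖ = 1) : T' = ⟪T', Jrot (T u)⟫ • Jrot (T u) :=
  eq_inner_Jrot_smul_Jrot_of_inner_eq_zero hunit.self_of_nhds
    (by rw [real_inner_comm]; exact hT.inner_eq_zero_of_eventually_norm_eq hunit)

theorem HasDerivAt.Jrot_of_norm_eq_one (hT : HasDerivAt T T' u)
    (hunit : ∀ᶠ x in 𝓝 u, ‖T x‖ = 1) :
    HasDerivAt (fun x => Jrot (T x)) (-⟪T', Jrot (T u)⟫ • T u) u := by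
  have hframe := hT.eq_smul_Jrot_of_norm_eq_one hunit
  refine (JrotCLM.hasFDerivAt.comp_hasDerivAt u hT).congr_deriv ?_
  calc JrotCLM T' = Jrot (⟪T', Jrot (T u)⟫ • Jrot (T u)) := by rw [JrotCLM_apply, ← hframe]
    _ = -⟪T', Jrot (T u)⟫ • T u := by rw [Jrot_smul, Jrot_Jrot, smul_neg, neg_smul]

def signedCurvature (c : ℝ → Plane) (t : ℝ) : ℝ := ⟪deriv (deriv c) t, Jrot (deriv c t)⟫

def evolute (c : ℝ → Plane) (t : ℝ) : Plane := c t + (signedCurvature c t)⁻¹ • Jrot (deriv c t)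

variable {γ : ℝ → Plane}

theorem hasDerivAt_evolute (hγ : DifferentiableAt ℝ γ u)
    (hT : HasDerivAt (deriv γ) (deriv (deriv γ) u) u) (hunit : ∀ᶠ x in 𝓝 u, ‖deriv γ x‖ = 1)
    {κ' : ℝ} (hκ : HasDerivAt (signedCurvature γ) κ' u) (hκ0 : signedCurvature γ u ≠ 0) :
    HasDerivAt (evolute γ) ((-κ' / signedCurvature γ u ^ 2) • Jrot (deriv γ u)) u := by
  refine (hγ.hasDerivAt.add ((hκ.inv hκ0).smul (hT.Jrot_of_norm_eq_one hunit))).congr_deriv ?_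
  change deriv γ u + ((signedCurvature γ u)⁻¹ • (-signedCurvature γ u • deriv γ u) + _) = _
  rw [smul_smul, mul_neg, inv_mul_cancel₀ hκ0, neg_smul, one_smul, add_neg_cancel_left]

theorem ContDiffOn.signedCurvature {U : Set ℝ} {n : WithTop ℕ∞} (hγ : ContDiffOn ℝ (n + 2) γ U)
    (hU : IsOpen U) : ContDiffOn ℝ n (signedCurvature γ) U := by
  have hT : ContDiffOn ℝ (n + 1) (deriv γ) U := hγ.deriv_of_isOpen hU (by rw [add_assoc]; rfl)
  exact (hT.deriv_of_isOpen hU le_rfl).inner ℝ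
    (JrotCLM.contDiff.comp_contDiffOn (hT.of_le le_self_add))

theorem signedCurvature_evolute_comp_leftInverse {U : Set ℝ} (hU : IsOpen U)
    (hγ : ContDiffOn ℝ 3 γ U) (hunit : ∀ s ∈ U, ‖deriv γ s‖ = 1)
    (hκ : ∀ s ∈ U, signedCurvature γ s ≠ 0) (hκ' : ∀ s ∈ U, deriv (signedCurvature γ) s ≠ 0)
    {ψ : ℝ → ℝ} (hψ : ∀ s ∈ U, ψ (signedCurvature γ s)⁻¹ = s) {s : ℝ} (hs : s ∈ U) :
    signedCurvature (evolute γ ∘ ψ) (signedCurvature γ s)⁻¹ =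
      -signedCurvature γ s ^ 3 / deriv (signedCurvature γ) s := by
  have hT (u) (hu : u ∈ U) : HasDerivAt (deriv γ) (deriv (deriv γ) u) u :=
    (((hγ.deriv_of_isOpen hU (m := 2) (by norm_num)).contDiffAt (hU.mem_nhds hu)).differentiableAt
      (by norm_num)).hasDerivAt
  have hunitU (u) (hu : u ∈ U) : ∀ᶠ x in 𝓝 u, ‖deriv γ x‖ = 1 :=
    eventually_of_mem (hU.mem_nhds hu) hunit
  have hκd (u) (hu : u ∈ U) :
      HasStrictDerivAt (signedCurvature γ) (deriv (signedCurvature γ) u) u :=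
    ((hγ.signedCurvature (n := 1) hU).contDiffAt (hU.mem_nhds hu)).hasStrictDerivAt one_ne_zero
  have hR (u) (hu : u ∈ U) := (hκd u hu).inv (hκ u hu)
  have hR' (u) (hu : u ∈ U) : -deriv (signedCurvature γ) u / signedCurvature γ u ^ 2 ≠ 0 :=
    div_ne_zero (neg_ne_zero.mpr (hκ' u hu)) (pow_ne_zero 2 (hκ u hu))
  have hev (u) (hu : u ∈ U) :=
    hasDerivAt_evolute ((hγ.differentiableOn (by norm_num)).differentiableAt (hU.mem_nhds hu))
      (hT u hu) (hunitU u hu) (hκd u hu).hasDerivAt (hκ u hu)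
  have hvel : deriv (evolute γ ∘ ψ) (signedCurvature γ s)⁻¹ = Jrot (deriv γ s) :=
    ((hev s hs).comp_leftInverse (hR s hs) (hR' s hs)
      (eventually_of_mem (hU.mem_nhds hs) hψ)).deriv
  have hacc := hasDerivAt_deriv_comp_leftInverse hU hev hR hR' hψ hs
    ((hT s hs).Jrot_of_norm_eq_one (hunitU s hs))
  show ⟪deriv (deriv (evolute γ ∘ ψ)) _, Jrot (deriv (evolute γ ∘ ψ) _)⟫ = _
  have hκs : ⟪deriv (deriv γ) s, Jrot (deriv γ s)⟫ = signedCurvature γ s := rfl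
  rw [hacc.deriv, hvel, Jrot_Jrot, inner_neg_right, real_inner_smul_left, real_inner_smul_left,
    real_inner_self_eq_norm_sq, hunit s hs, hκs]
  field_simp

end PlaneCurve

theorem evolute_curvature_formula_general
    (a b : ℝ) (γ ν ev : ℝ → Plane) (κ R : ℝ → ℝ)
    (harc : ∀ s ∈ Ioo a b, ‖deriv γ s‖ = 1)
    (hν : ∀ s, ν s = Jrot (deriv γ s))
    (hκdef : ∀ s, κ s = ⟪deriv (deriv γ) s, ν s⟫)
    (hκ : ∀ s ∈ Ioo a b, κ s ≠ 0)
    (hR : ∀ s, R s = (κ s)⁻¹)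
    (hev : ∀ s, ev s = γ s + R s • ν s)
    (hγ3 : ContDiffOn ℝ 3 γ (Ioo a b))
    (hκ' : ∀ s ∈ Ioo a b, deriv κ s ≠ 0)
    (ψ : ℝ → ℝ) (hψ : ∀ s ∈ Ioo a b, ψ (R s) = s) :
    ∀ s ∈ Ioo a b,
      ⟪deriv (deriv (ev ∘ ψ)) (R s), Jrot (deriv (ev ∘ ψ) (R s))⟫ =
        -(κ s) ^ 3 / deriv κ s := by
  obtain rfl : ν = fun s => Jrot (deriv γ s) := funext hν
  obtain rfl : κ = signedCurvature γ := funext hκdef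
  obtain rfl : R = fun s => (signedCurvature γ s)⁻¹ := funext hR
  obtain rfl : ev = evolute γ := funext hev
  exact fun s hs => signedCurvature_evolute_comp_leftInverse isOpen_Ioo hγ3 harc hκ hκ' hψ hs

/-- the signed curvature of the evolute, in its arclength
parametrization `ev ∘ R⁻¹`, at the parameter value `R s` equals `-κ(s)³/κ'(s)`. -/
theorem evolute_curvature_formula
    (a b : ℝ) (hab : a < b) (γ ν ev : ℝ → Plane) (κ R : ℝ → ℝ)
    (hγ : ContDiffOn ℝ 2 γ (Ioo a b))
    (harc : ∀ s ∈ Ioo a b, ‖deriv γ s‖ = 1)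
    (hν : ∀ s, ν s = Jrot (deriv γ s))
    (hκdef : ∀ s, κ s = ⟪deriv (deriv γ) s, ν s⟫)
    (hκ : ∀ s ∈ Ioo a b, κ s ≠ 0)
    (hR : ∀ s, R s = (κ s)⁻¹)
    (hev : ∀ s, ev s = γ s + R s • ν s)
    (hγ3 : ContDiffOn ℝ 3 γ (Ioo a b))
    (hκ' : ∀ s ∈ Ioo a b, deriv κ s ≠ 0)
    (ψ : ℝ → ℝ) (hψ : ∀ s ∈ Ioo a b, ψ (R s) = s) :
    ∀ s ∈ Ioo a b,
      ⟪deriv (deriv (ev ∘ ψ)) (R s), Jrot (deriv (ev ∘ ψ) (R s))⟫ =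
        -(κ s) ^ 3 / deriv κ s :=
  evolute_curvature_formula_general a b γ ν ev κ R harc hν hκdef hκ hR hev hγ3 hκ' ψ hψ
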